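/- arXiv:1812.03302 — 2 statements merged into one kernel-verified Lean document; each statement's English description precedes it below -/
import Mathlib

section
/- In the homogeneous networked system, let m be the number of nodes with external control inputs (the number of indices i with δ_i = 1), and suppose N > m·rank(B). If the pair (Φ, Ψ) is controllable, then the pair (A, C) is observable. -/
/-! If `(A, C)` is not observable, there are `s` and `v ≠ 0` with `A v = s v` and `C v = 0`.
Since the coupling `W ⊗ HC` annihilates every `x ⊗ v`, all of these vectors are eigenvectors of
`Φ` for `s`, so `rank (s I − Φ) ≤ N n − N`. Controllability at `s` then forces
`N n = rank [s I − Φ, Ψ] ≤ N n − N + rank Ψ`, whereas `rank Ψ ≤ rank Δ · rank B < N`. -/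

open Matrix Finset Kronecker

/-- PBH test: the pair `(M, B)` is controllable iff `[s·I − M, B]` has full row rank
for every `s ∈ ℂ`. -/
def IsControllable {q r : Type*} [Fintype q] [Fintype r] [DecidableEq q]
    (M : Matrix q q ℂ) (B : Matrix q r ℂ) : Prop :=
  ∀ s : ℂ, (Matrix.fromCols (s • (1 : Matrix q q ℂ) - M) B).rank = Fintype.card q

/-- PBH test: the pair `(M, C)` is observable iff `[s·I − M; C]` has full column rank
for every `s ∈ ℂ`. -/
def IsObservable {q r : Type*} [Fintype q] [Fintype r] [DecidableEq q]
    (M : Matrix q q ℂ) (C : Matrix r q ℂ) : Prop :=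
  ∀ s : ℂ, (Matrix.fromRows (s • (1 : Matrix q q ℂ) - M) C).rank = Fintype.card q

namespace Matrix

variable {K L : Type*} [Field K] [CommRing L] [StrongRankCondition L] {l m n o : Type*}
  [Fintype n] [Fintype o]

theorem exists_eq_mul_fin_rank [DecidableEq n] (M : Matrix m n K) :
    ∃ (P : Matrix m (Fin M.rank) K) (Q : Matrix (Fin M.rank) n K), M = P * Q := by
  let R := LinearMap.range M.mulVecLin
  let e : R ≃ₗ[K] (Fin M.rank → K) :=
    LinearEquiv.ofFinrankEq _ _ (Module.finrank_fin_fun K).symm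
  refine ⟨LinearMap.toMatrix' (R.subtype ∘ₗ e.symm.toLinearMap),
    LinearMap.toMatrix' (e.toLinearMap ∘ₗ M.mulVecLin.rangeRestrict), ?_⟩
  rw [← LinearMap.toMatrix'_comp]
  conv_lhs => rw [← LinearMap.toMatrix'_toLin' M, Matrix.toLin'_apply']
  congr 1
  ext
  simp [R]

theorem rank_map_le (f : K →+* L) (M : Matrix m n K) :
    (M.map f).rank ≤ M.rank := by
  classical
  obtain ⟨P, Q, hM⟩ := M.exists_eq_mul_fin_rank
  calc (M.map f).rank = (P.map f * Q.map f).rank := by rw [← Matrix.map_mul, ← hM]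
    _ ≤ Fintype.card (Fin M.rank) := (rank_mul_le_left _ _).trans (rank_le_card_width _)
    _ = M.rank := Fintype.card_fin _

theorem rank_kronecker_le (X : Matrix l n K) (Y : Matrix m o K) :
    (X ⊗ₖ Y).rank ≤ X.rank * Y.rank := by
  classical
  obtain ⟨P₁, Q₁, hX⟩ := X.exists_eq_mul_fin_rank
  obtain ⟨P₂, Q₂, hY⟩ := Y.exists_eq_mul_fin_rank
  calc (X ⊗ₖ Y).rank = ((P₁ ⊗ₖ P₂) * (Q₁ ⊗ₖ Q₂)).rank := by
        rw [← mul_kronecker_mul, ← hX, ← hY]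
    _ ≤ Fintype.card (Fin X.rank × Fin Y.rank) :=
        (rank_mul_le_left _ _).trans (rank_le_card_width _)
    _ = X.rank * Y.rank := by simp

theorem rank_fromCols_le [Fintype m] (P : Matrix m n K) (Q : Matrix m o K) :
    (fromCols P Q).rank ≤ P.rank + Q.rank := by
  have hcols : Set.range (fromCols P Q).col = Set.range P.col ∪ Set.range Q.col := by
    simp only [col_eq_transpose, transpose_fromCols]
    exact Set.Sum.elim_range _ _
  rw [rank_eq_finrank_span_cols, rank_eq_finrank_span_cols, rank_eq_finrank_span_cols, hcols,
    Submodule.span_union]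
  exact Submodule.finrank_add_le_finrank_add_finrank _ _

theorem exists_mulVec_eq_zero_of_rank_lt {M : Matrix m n K} (h : M.rank < Fintype.card n) :
    ∃ v ≠ 0, M *ᵥ v = 0 := by
  by_contra! hM
  have hinj : Function.Injective M.mulVecLin :=
    (injective_iff_map_eq_zero _).2 fun v hv => by_contra fun hv0 => hM v hv0 hv
  exact h.ne <| by
    rw [rank, LinearMap.finrank_range_of_inj hinj, Module.finrank_fintype_fun_eq_card]

theorem rank_one_kronecker_replicateCol [Fintype m] [Fintype l] [DecidableEq l] {v : m → K}
    (hv : v ≠ 0) : ((1 : Matrix l l K) ⊗ₖ replicateCol Unit v).rank = Fintype.card l := by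
  classical
  obtain ⟨j, hj⟩ : ∃ j, v j ≠ 0 := Function.ne_iff.mp hv
  have hleft : replicateRow Unit (Pi.single j (v j)⁻¹) * replicateCol Unit v = 1 := by
    ext; simp [inv_mul_cancel₀ hj]
  refine le_antisymm ((rank_le_card_width _).trans_eq (by simp)) ?_
  calc Fintype.card l = (1 : Matrix (l × Unit) (l × Unit) K).rank := by simp
    _ = (((1 : Matrix l l K) ⊗ₖ replicateRow Unit (Pi.single j (v j)⁻¹)) *
          ((1 : Matrix l l K) ⊗ₖ replicateCol Unit v)).rank := by
      rw [← mul_kronecker_mul, one_mul, hleft, one_kronecker_one]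
    _ ≤ _ := rank_mul_le_right _ _

end Matrix

def networkMatrix {K l n o : Type*} [Field K] [Fintype o] [DecidableEq l]
    (A : Matrix n n K) (H : Matrix n o K) (C : Matrix o n K) (W : Matrix l l K) :
    Matrix (l × n) (l × n) K :=
  (1 : Matrix l l K) ⊗ₖ A + W ⊗ₖ (H * C)

section Network

variable {K l n o : Type*} [Field K] [Fintype l] [DecidableEq l] [Fintype n] [Fintype o]
  {A : Matrix n n K} {H : Matrix n o K} {C : Matrix o n K} (W : Matrix l l K)
  {s : K} {v : n → K}

theorem networkMatrix_mul_one_kronecker_replicateCol (hAv : A *ᵥ v = s • v)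
    (hCv : C *ᵥ v = 0) :
    networkMatrix A H C W * ((1 : Matrix l l K) ⊗ₖ replicateCol Unit v) =
      s • ((1 : Matrix l l K) ⊗ₖ replicateCol Unit v) := by
  have hA : A * replicateCol Unit v = s • replicateCol Unit v := by
    rw [← replicateCol_mulVec, hAv, replicateCol_smul]
  have hHC : H * C * replicateCol Unit v = 0 := by
    rw [Matrix.mul_assoc, ← replicateCol_mulVec, hCv, replicateCol_zero, Matrix.mul_zero]
  rw [networkMatrix, Matrix.add_mul, ← mul_kronecker_mul, ← mul_kronecker_mul, hA, hHC,
    kronecker_zero, add_zero, Matrix.one_mul, kronecker_smul]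

theorem rank_sub_networkMatrix_add_card_le [DecidableEq n] (hv : v ≠ 0) (hAv : A *ᵥ v = s • v)
    (hCv : C *ᵥ v = 0) :
    (s • 1 - networkMatrix A H C W).rank + Fintype.card l ≤ Fintype.card (l × n) := by
  rw [← rank_one_kronecker_replicateCol hv]
  refine rank_add_rank_le_card_of_mul_eq_zero ?_
  rw [Matrix.sub_mul, networkMatrix_mul_one_kronecker_replicateCol W hAv hCv, Matrix.smul_mul,
    Matrix.one_mul, sub_self]

end Network

theorem exists_eigenvector_of_not_isObservable {q r : Type*} [Fintype q] [Fintype r]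
    [DecidableEq q] {M : Matrix q q ℂ} {C : Matrix r q ℂ} (h : ¬ IsObservable M C) :
    ∃ (s : ℂ) (v : q → ℂ), v ≠ 0 ∧ M *ᵥ v = s • v ∧ C *ᵥ v = 0 := by
  obtain ⟨s, hs⟩ := not_forall.mp h
  obtain ⟨v, hv, hMv⟩ :=
    exists_mulVec_eq_zero_of_rank_lt ((rank_le_card_width _).lt_of_ne hs)
  rw [fromRows_mulVec, ← Sum.elim_zero_zero, Sum.elim_eq_iff, sub_mulVec, smul_mulVec,
    one_mulVec, sub_eq_zero] at hMv
  exact ⟨s, v, hv, hMv.1.symm, hMv.2⟩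

theorem stmt9_general (N n m p : ℕ)
    (A : Matrix (Fin n) (Fin n) ℝ)
    (B : Matrix (Fin n) (Fin p) ℝ)
    (C : Matrix (Fin m) (Fin n) ℝ)
    (H : Matrix (Fin n) (Fin m) ℝ)
    (W : Matrix (Fin N) (Fin N) ℝ)
    (δ : Fin N → ℝ) (hδ : ∀ i, δ i = 0 ∨ δ i = 1)
    -- N exceeds (number of controlled nodes) · rank(B)
    (hcount : N > (Finset.univ.filter (fun i : Fin N => δ i = 1)).card * B.rank)
    -- Φ = I_N ⊗ A + W ⊗ (H·C) and Ψ = Δ ⊗ B are controllable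
    (hctrb : IsControllable
      ((1 : Matrix (Fin N) (Fin N) ℂ) ⊗ₖ (A.map Complex.ofReal)
        + (W.map Complex.ofReal) ⊗ₖ ((H.map Complex.ofReal) * (C.map Complex.ofReal)))
      (((Matrix.diagonal δ).map Complex.ofReal) ⊗ₖ (B.map Complex.ofReal))) :
    IsObservable (A.map Complex.ofReal) (C.map Complex.ofReal) := by
  by_contra hobs
  obtain ⟨s, v, hv, hAv, hCv⟩ := exists_eigenvector_of_not_isObservable hobs
  have hdefect := rank_sub_networkMatrix_add_card_le (W.map Complex.ofReal)
    (H := H.map Complex.ofReal) hv hAv hCv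
  have hΨ : (((Matrix.diagonal δ).map Complex.ofReal) ⊗ₖ (B.map Complex.ofReal)).rank ≤
      (Finset.univ.filter (fun i : Fin N => δ i = 1)).card * B.rank := calc
    _ ≤ ((diagonal δ).map Complex.ofReal).rank * (B.map Complex.ofReal).rank :=
      rank_kronecker_le _ _
    _ ≤ (diagonal δ).rank * B.rank :=
      Nat.mul_le_mul (rank_map_le Complex.ofRealHom _) (rank_map_le Complex.ofRealHom _)
    _ = _ := by
      rw [rank_diagonal, Fintype.card_subtype]
      congr 2
      ext i
      rcases hδ i with h | h <;> simp [h]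
  have hsplit := (hctrb s).symm.trans_le (rank_fromCols_le _ _)
  simp only [networkMatrix, Fintype.card_prod, Fintype.card_fin] at hdefect hsplit
  omega

/-- Lemma 2: in the homogeneous networked system with
`Φ = I_N ⊗ A + W ⊗ (H·C)` and `Ψ = Δ ⊗ B`, if the number `m` of controlled nodes
satisfies `N > m·rank(B)` and `(Φ, Ψ)` is controllable, then `(A, C)` is observable. -/
theorem stmt9 (N n m p : ℕ) (hN : 1 ≤ N)
    (A : Matrix (Fin n) (Fin n) ℝ)
    (B : Matrix (Fin n) (Fin p) ℝ)
    (C : Matrix (Fin m) (Fin n) ℝ)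
    (H : Matrix (Fin n) (Fin m) ℝ)
    (W : Matrix (Fin N) (Fin N) ℝ)
    (δ : Fin N → ℝ) (hδ : ∀ i, δ i = 0 ∨ δ i = 1)
    -- N exceeds (number of controlled nodes) · rank(B)
    (hcount : N > (Finset.univ.filter (fun i : Fin N => δ i = 1)).card * B.rank)
    -- Φ = I_N ⊗ A + W ⊗ (H·C) and Ψ = Δ ⊗ B are controllable
    (hctrb : IsControllable
      ((1 : Matrix (Fin N) (Fin N) ℂ) ⊗ₖ (A.map Complex.ofReal)
        + (W.map Complex.ofReal) ⊗ₖ ((H.map Complex.ofReal) * (C.map Complex.ofReal)))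
      (((Matrix.diagonal δ).map Complex.ofReal) ⊗ₖ (B.map Complex.ofReal))) :
    IsObservable (A.map Complex.ofReal) (C.map Complex.ofReal) :=
  stmt9_general N n m p A B C H W δ hδ hcount hctrb
end

section
/- Suppose |ν| < N (at least one node has no external control input), H = (0,…,0,κ_n)ᵀ ∈ ℝ^{n×1} with κ_n ≠ 0, and C = (τ_1, 0,…,0) ∈ ℝ^{1×n} with τ_1 ≠ 0. Then the pair (Φ, Ψ) is controllable provided the following two conditions hold: (a) every family of column vectors α_1,…,α_N ∈ ℂ^{n×1} satisfying α_iᵀA = 0 for all i = 1,…,N and α_iᵀB = 0 for every i ∈ ν, with not all α_i zero, satisfies Wᵀρᵀ ≠ 0, where ρ = [α_1,…,α_N] ∈ ℂ^{n×N} (equivalently, there exists i with Σ_{j=1}^{N} ω_{ji} α_j ≠ 0); and (b) for every nonzero s ∈ ℂ, the N×(2N) matrix [I_N − γ(s)·W, η(s)·Δ] has rank N, where γ(s) = C(s·I_n − A)^{−1}H ∈ ℂ and η(s) = C(s·I_n − A)^{−1}B ∈ ℂ. -/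
open Matrix Finset Kronecker

/-!
A left null vector of `[s • 1 - Φ, Ψ]` splits into blocks `xᵢ ∈ ℂⁿ`, one per node. As `A` is the
shift and `H C = κ τ eₙ e₁ᵀ`, the equation of node `i` reads `s xᵢ = xᵢ A + κ τ cᵢ e₁ᵀ` with
`cᵢ = ∑ⱼ ωⱼᵢ xⱼₙ`, and `Ψ` contributes `δᵢ xᵢₙ = 0`.

For `s = 0` every `xᵢ` is supported on its last coordinate and `c = 0`, i.e. `Wᵀρᵀ = 0`, so
condition (a) forces `x = 0`. For `s ≠ 0` the recursion gives `xᵢₖ = κ τ cᵢ s⁻ᵏ`; the row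
`C (s - A)⁻¹` obeys the same recursion, whence `γ(s) = κ τ s⁻ⁿ` and `η(s) = τ s⁻ⁿ`. So the last
coordinates `a = (xᵢₙ)ᵢ` satisfy `a (1 - γ(s) W) = 0` and `a Δ = 0`, condition (b) gives `a = 0`,
and then `c = 0` and `x = 0`.
-/

namespace Matrix

theorem rank_eq_card_iff_vecMul_eq_zero {K m n : Type*} [Field K] [Fintype m] [Fintype n]
    (M : Matrix m n K) : M.rank = Fintype.card m ↔ ∀ x : m → K, x ᵥ* M = 0 → x = 0 := by
  rw [rank_eq_finrank_span_row, eq_comm, ← Set.finrank,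
    ← linearIndependent_iff_card_eq_finrank_span, ← vecMul_injective_iff, ← coe_vecMulLinear,
    injective_iff_map_eq_zero]
  rfl

theorem vecMul_kronecker_apply {R ι κ ι' κ' : Type*} [CommSemiring R] [Fintype ι] [Fintype κ]
    (x : ι × κ → R) (P : Matrix ι ι' R) (Q : Matrix κ κ' R) (i : ι') (k : κ') :
    (x ᵥ* (P ⊗ₖ Q)) (i, k) = ((fun j => (Function.curry x j ᵥ* Q) k) ᵥ* P) i := by
  simp [vecMul, dotProduct, Fintype.sum_prod_type, Finset.mul_sum, mul_assoc, mul_comm]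

theorem vecMul_smul_one_sub_kronecker_eq_zero_iff {R ι κ : Type*} [CommRing R] [Fintype ι]
    [DecidableEq ι] [Fintype κ] [DecidableEq κ] (x : ι × κ → R) (s : R) (M Q : Matrix κ κ R)
    (W : Matrix ι ι R) :
    x ᵥ* (s • 1 - (1 ⊗ₖ M + W ⊗ₖ Q)) = 0 ↔
      ∀ i, Function.curry x i ᵥ* (s • 1 - M) = ∑ j, W j i • (Function.curry x j ᵥ* Q) := by
  simp only [funext_iff, Prod.forall, vecMul_sub, vecMul_add, vecMul_smul, vecMul_one,
    Pi.sub_apply, Pi.add_apply, Pi.smul_apply, sub_eq_zero, vecMul_kronecker_apply,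
    Finset.sum_apply, smul_eq_mul]
  simp [vecMul, dotProduct, mul_comm, sub_eq_iff_eq_add']

theorem vecMul_replicateCol_mul_replicateRow {R κ κ' : Type*} [CommSemiring R] [Fintype κ]
    (v u : κ → R) (w : κ' → R) :
    v ᵥ* (replicateCol (Fin 1) u * replicateRow (Fin 1) w) = (v ⬝ᵥ u) • w := by
  rw [← vecMul_vecMul, mulVec_replicateCol_eq_const]
  ext
  simp [vecMul, dotProduct]

theorem sum_smul_vecMul_replicateCol_mul_replicateRow {R ι κ : Type*} [CommSemiring R]
    [Fintype ι] [Fintype κ] [DecidableEq κ] (W : Matrix ι ι R) (X : ι → κ → R) (p q : κ)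
    (b c : R) (i : ι) :
    ∑ j, W j i • (X j ᵥ* (replicateCol (Fin 1) (Pi.single p c) *
      replicateRow (Fin 1) (Pi.single q b))) =
      Pi.single q (b * c * ((fun j => X j p) ᵥ* W) i) := by
  ext k
  simp [vecMul_replicateCol_mul_replicateRow, vecMul, dotProduct, Pi.single_apply, Finset.mul_sum,
    mul_comm, mul_left_comm]

def upperShift (n : ℕ) (R : Type*) [Zero R] [One R] : Matrix (Fin n) (Fin n) R :=
  of fun k l => if (l : ℕ) = k + 1 then 1 else 0

section upperShift

variable {m : ℕ}

section Semiring

variable {R : Type*} [NonAssocSemiring R]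

theorem vecMul_upperShift_zero (v : Fin (m + 1) → R) : (v ᵥ* upperShift (m + 1) R) 0 = 0 := by
  simp [vecMul, dotProduct, upperShift]

theorem vecMul_upperShift_succ (v : Fin (m + 1) → R) (k : Fin m) :
    (v ᵥ* upperShift (m + 1) R) k.succ = v k.castSucc := by
  simp only [vecMul, dotProduct, upperShift, of_apply, Fin.val_succ, add_left_inj, mul_ite,
    mul_one, mul_zero]
  rw [Fintype.sum_eq_single k.castSucc] <;> simp +contextual [Fin.ext_iff, eq_comm]

theorem vecMul_upperShift_eq_zero_iff (v : Fin (m + 1) → R) :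
    v ᵥ* upperShift (m + 1) R = 0 ↔ ∀ k : Fin m, v k.castSucc = 0 := by
  simp [funext_iff, Fin.forall_fin_succ, vecMul_upperShift_zero, vecMul_upperShift_succ]

end Semiring

theorem vecMul_smul_one_sub_upperShift_eq_single_iff {R : Type*} [CommRing R] (s b : R)
    (v : Fin (m + 1) → R) :
    v ᵥ* (s • 1 - upperShift (m + 1) R) = Pi.single 0 b ↔
      s * v 0 = b ∧ ∀ k : Fin m, s * v k.succ = v k.castSucc := by
  simp [funext_iff, Fin.forall_fin_succ, vecMul_sub, vecMul_smul, vecMul_upperShift_zero,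
    vecMul_upperShift_succ, sub_eq_zero, Pi.single_apply, Fin.succ_ne_zero]

variable {K : Type*} [Field K]

theorem eq_of_vecMul_smul_one_sub_upperShift_eq_single {s b : K} (hs : s ≠ 0)
    {v : Fin (m + 1) → K} (hv : v ᵥ* (s • 1 - upperShift (m + 1) K) = Pi.single 0 b) :
    v = fun k : Fin (m + 1) => b * s⁻¹ ^ ((k : ℕ) + 1) := by
  obtain ⟨h0, hsucc⟩ := (vecMul_smul_one_sub_upperShift_eq_single_iff s b v).mp hv
  funext k
  induction k using Fin.induction with
  | zero => rw [← h0, Fin.val_zero, zero_add, pow_one, mul_comm s, mul_inv_cancel_right₀ hs]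
  | succ k ih =>
    rw [Fin.val_succ, pow_succ, ← mul_assoc, ← Fin.val_castSucc, ← ih, ← hsucc]
    field_simp

theorem isUnit_smul_one_sub_upperShift {s : K} (hs : s ≠ 0) :
    IsUnit (s • 1 - upperShift (m + 1) K) := by
  rw [← vecMul_injective_iff_isUnit, ← coe_vecMulLinear, injective_iff_map_eq_zero]
  intro v hv
  simpa [Pi.zero_def] using
    eq_of_vecMul_smul_one_sub_upperShift_eq_single hs (b := 0) (hv.trans (Pi.single_zero _).symm)

theorem single_vecMul_inv_smul_one_sub_upperShift {s : K} (hs : s ≠ 0) (b : K) :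
    Pi.single (0 : Fin (m + 1)) b ᵥ* (s • 1 - upperShift (m + 1) K)⁻¹ =
      fun k : Fin (m + 1) => b * s⁻¹ ^ ((k : ℕ) + 1) := by
  apply eq_of_vecMul_smul_one_sub_upperShift_eq_single hs
  rw [vecMul_vecMul, nonsing_inv_mul _ ((isUnit_iff_isUnit_det _).mp
    (isUnit_smul_one_sub_upperShift hs)), vecMul_one]

theorem replicateRow_mul_inv_smul_one_sub_upperShift_mul_replicateCol {ι : Type*} {s : K}
    (hs : s ≠ 0) (b c : K) (i j : ι) :
    (replicateRow ι (Pi.single (0 : Fin (m + 1)) b) * (s • 1 - upperShift (m + 1) K)⁻¹ *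
      replicateCol ι (Pi.single (Fin.last m) c)) i j = b * c * s⁻¹ ^ (m + 1) := by
  rw [← replicateRow_vecMul, replicateRow_mul_replicateCol_apply,
    single_vecMul_inv_smul_one_sub_upperShift hs, dotProduct_single, Fin.val_last]
  ring

end upperShift

end Matrix

theorem isControllable_iff {q r : Type*} [Fintype q] [Fintype r] [DecidableEq q]
    (M : Matrix q q ℂ) (B : Matrix q r ℂ) :
    IsControllable M B ↔ ∀ (s : ℂ) (x : q → ℂ), x ᵥ* (s • 1 - M) = 0 → x ᵥ* B = 0 → x = 0 := by
  simp only [IsControllable, rank_eq_card_iff_vecMul_eq_zero, vecMul_fromCols,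
    ← Sum.elim_zero_zero, Sum.elim_eq_iff, and_imp]

section NodeEquations

variable {K ι : Type*} [Field K] [Fintype ι] {m : ℕ}

def NodeEquations (W : Matrix ι ι K) (g s : K) (X : ι → Fin (m + 1) → K) : Prop :=
  ∀ i, X i ᵥ* (s • 1 - upperShift (m + 1) K) =
    Pi.single 0 (g * ((fun j => X j (Fin.last m)) ᵥ* W) i)

variable {W : Matrix ι ι K} {g : K} {X : ι → Fin (m + 1) → K}

theorem NodeEquations.vecMul_upperShift_eq_zero (h : NodeEquations W g 0 X) (i : ι) :
    X i ᵥ* upperShift (m + 1) K = 0 :=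
  (vecMul_upperShift_eq_zero_iff _).mpr fun k => by
    simpa [eq_comm] using ((vecMul_smul_one_sub_upperShift_eq_single_iff _ _ _).mp (h i)).2 k

theorem NodeEquations.sum_smul_eq_zero (hg : g ≠ 0) (h : NodeEquations W g 0 X) (i : ι) :
    ∑ j, W j i • X j = 0 := by
  have hW : ((fun j => X j (Fin.last m)) ᵥ* W) i = 0 := by
    simpa [hg, eq_comm] using ((vecMul_smul_one_sub_upperShift_eq_single_iff _ _ _).mp (h i)).1
  funext k
  induction k using Fin.lastCases with
  | last => simpa [vecMul, dotProduct, mul_comm] using hW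
  | cast k => simp [(vecMul_upperShift_eq_zero_iff _).mp (h.vecMul_upperShift_eq_zero _)]

theorem NodeEquations.eq_zero [DecidableEq ι] {d : ι → K} {s η : K} (hs : s ≠ 0)
    (h : NodeEquations W g s X) (hctrl : ∀ i, X i (Fin.last m) * d i = 0)
    (hb : ∀ y : ι → K,
      y ᵥ* fromCols (1 - (g * s⁻¹ ^ (m + 1)) • W) (η • diagonal d) = 0 → y = 0) :
    X = 0 := by
  set a : ι → K := fun j => X j (Fin.last m)
  have hX : ∀ i, X i = fun k : Fin (m + 1) => g * (a ᵥ* W) i * s⁻¹ ^ ((k : ℕ) + 1) := fun i =>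
    eq_of_vecMul_smul_one_sub_upperShift_eq_single hs (h i)
  have ha : a = (g * s⁻¹ ^ (m + 1)) • (a ᵥ* W) := by
    funext i
    change X i (Fin.last m) = _
    rw [hX i]
    simp only [Fin.val_last, Pi.smul_apply, smul_eq_mul]
    ring
  have ha0 : a = 0 := hb a (by
    rw [vecMul_fromCols, vecMul_sub, vecMul_one, vecMul_smul, ← ha, vecMul_smul,
      show a ᵥ* diagonal d = 0 from funext fun i => (vecMul_diagonal _ _ _).trans (hctrl i)]
    simp)
  funext i k
  rw [hX i, ha0]
  simp

end NodeEquations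

theorem stmt13_general (N n : ℕ) (hn : 0 < n)
    (A : Matrix (Fin n) (Fin n) ℝ)
    (hA : ∀ k l : Fin n, A k l = if (l : ℕ) = (k : ℕ) + 1 then 1 else 0)
    (B : Matrix (Fin n) (Fin 1) ℝ)
    (hB : ∀ (k : Fin n) (l : Fin 1), B k l = if (k : ℕ) = n - 1 then 1 else 0)
    -- H = (0,…,0,κₙ)ᵀ with κₙ ≠ 0
    (H : Matrix (Fin n) (Fin 1) ℝ) (κ : ℝ) (hκ : κ ≠ 0)
    (hH : ∀ (k : Fin n) (l : Fin 1), H k l = if (k : ℕ) = n - 1 then κ else 0)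
    -- C = (τ₁,0,…,0) with τ₁ ≠ 0
    (C : Matrix (Fin 1) (Fin n) ℝ) (τ : ℝ) (hτ : τ ≠ 0)
    (hC : ∀ (k : Fin 1) (l : Fin n), C k l = if (l : ℕ) = 0 then τ else 0)
    (W : Matrix (Fin N) (Fin N) ℝ)
    (δ : Fin N → ℝ)
    -- (a)
    (ha : ∀ α : Fin N → (Fin n → ℂ),
      (∀ i : Fin N, α i ᵥ* (A.map Complex.ofReal) = 0) →
      (∀ i : Fin N, δ i = 1 → α i ᵥ* (B.map Complex.ofReal) = 0) →
      (∃ i : Fin N, α i ≠ 0) →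
      ∃ i : Fin N, ∑ j : Fin N, ((W j i : ℝ) : ℂ) • α j ≠ 0)
    -- (b)
    (hb : ∀ s : ℂ, s ≠ 0 →
      (Matrix.fromCols
        ((1 : Matrix (Fin N) (Fin N) ℂ)
          - ((C.map Complex.ofReal)
              * (s • (1 : Matrix (Fin n) (Fin n) ℂ) - A.map Complex.ofReal)⁻¹
              * (H.map Complex.ofReal)) 0 0 • (W.map Complex.ofReal))
        (((C.map Complex.ofReal)
              * (s • (1 : Matrix (Fin n) (Fin n) ℂ) - A.map Complex.ofReal)⁻¹
              * (B.map Complex.ofReal)) 0 0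
          • ((Matrix.diagonal δ).map Complex.ofReal))).rank = N) :
    IsControllable
      ((1 : Matrix (Fin N) (Fin N) ℂ) ⊗ₖ (A.map Complex.ofReal)
        + (W.map Complex.ofReal) ⊗ₖ ((H.map Complex.ofReal) * (C.map Complex.ofReal)))
      (((Matrix.diagonal δ).map Complex.ofReal) ⊗ₖ (B.map Complex.ofReal)) := by
  obtain ⟨m, rfl⟩ : ∃ m, n = m + 1 := ⟨n - 1, by omega⟩
  have hA' : A.map Complex.ofReal = upperShift (m + 1) ℂ := by
    ext k l; simp [hA, upperShift, apply_ite Complex.ofReal]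
  have hB' : B.map Complex.ofReal = replicateCol (Fin 1) (Pi.single (Fin.last m) 1) := by
    ext k l; simp [hB, Pi.single_apply, Fin.ext_iff, apply_ite Complex.ofReal]
  have hH' : H.map Complex.ofReal = replicateCol (Fin 1) (Pi.single (Fin.last m) (κ : ℂ)) := by
    ext k l; simp [hH, Pi.single_apply, Fin.ext_iff, apply_ite Complex.ofReal]
  have hC' : C.map Complex.ofReal = replicateRow (Fin 1) (Pi.single 0 (τ : ℂ)) := by
    ext k l; simp [hC, Pi.single_apply, Fin.val_eq_zero_iff, apply_ite Complex.ofReal]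
  rw [hA', hB'] at ha
  rw [hA', hB', hH', hC', diagonal_map Complex.ofReal_zero] at hb ⊢
  rw [isControllable_iff]
  intro s x hΦ hΨ
  set X := Function.curry x
  have hnode : NodeEquations (W.map Complex.ofReal) (τ * κ) s X := fun i => by
    rw [(vecMul_smul_one_sub_kronecker_eq_zero_iff _ _ _ _ _).mp hΦ i,
      sum_smul_vecMul_replicateCol_mul_replicateRow]
  have hctrl : ∀ i, X i (Fin.last m) * δ i = 0 := fun i => by
    simpa [X, vecMul_kronecker_apply, mulVec_replicateCol_eq_const, vecMul_diagonal] using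
      congrFun hΨ (i, 0)
  suffices X = 0 by funext ⟨i, k⟩; exact congrFun (congrFun this i) k
  rcases eq_or_ne s 0 with rfl | hs
  · by_contra hX
    have hcontrolled : ∀ i, δ i = 1 →
        X i ᵥ* replicateCol (Fin 1) (Pi.single (Fin.last m) 1) = 0 := fun i hi => by
      simpa [mulVec_replicateCol_eq_const, hi, funext_iff] using hctrl i
    obtain ⟨i, hi⟩ := ha X hnode.vecMul_upperShift_eq_zero hcontrolled (Function.ne_iff.mp hX)
    exact hi (hnode.sum_smul_eq_zero (by simp [hτ, hκ]) i)
  · refine hnode.eq_zero hs hctrl (η := τ * s⁻¹ ^ (m + 1))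
      ((rank_eq_card_iff_vecMul_eq_zero _).mp ?_)
    simpa [replicateRow_mul_inv_smul_one_sub_upperShift_mul_replicateCol hs] using hb s hs

/-- Corollary 3: in the SISO networked setup with `A` the upper shift
matrix, `B = eₙ`, `H = (0,…,0,κₙ)ᵀ` with `κₙ ≠ 0` and `C = (τ₁,0,…,0)` with `τ₁ ≠ 0`,
and with at least one node not under external control, the pair `(Φ, Ψ)` is controllable
provided that (a) every nonzero family `α₁,…,α_N` with `αᵢᵀA = 0` for all `i` and
`αᵢᵀB = 0` for all controlled `i` satisfies `Wᵀρᵀ ≠ 0`, and (b) for every nonzero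
`s ∈ ℂ`, `[I_N − γ(s)·W, η(s)·Δ]` has rank `N`, where `γ(s) = C(sI−A)⁻¹H` and
`η(s) = C(sI−A)⁻¹B`. -/
theorem stmt13 (N n : ℕ) (hN : 1 ≤ N) (hn : 0 < n)
    (A : Matrix (Fin n) (Fin n) ℝ)
    (hA : ∀ k l : Fin n, A k l = if (l : ℕ) = (k : ℕ) + 1 then 1 else 0)
    (B : Matrix (Fin n) (Fin 1) ℝ)
    (hB : ∀ (k : Fin n) (l : Fin 1), B k l = if (k : ℕ) = n - 1 then 1 else 0)
    -- H = (0,…,0,κₙ)ᵀ with κₙ ≠ 0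
    (H : Matrix (Fin n) (Fin 1) ℝ) (κ : ℝ) (hκ : κ ≠ 0)
    (hH : ∀ (k : Fin n) (l : Fin 1), H k l = if (k : ℕ) = n - 1 then κ else 0)
    -- C = (τ₁,0,…,0) with τ₁ ≠ 0
    (C : Matrix (Fin 1) (Fin n) ℝ) (τ : ℝ) (hτ : τ ≠ 0)
    (hC : ∀ (k : Fin 1) (l : Fin n), C k l = if (l : ℕ) = 0 then τ else 0)
    (W : Matrix (Fin N) (Fin N) ℝ)
    (δ : Fin N → ℝ) (hδ : ∀ i, δ i = 0 ∨ δ i = 1)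
    -- |ν| < N : at least one node has no external control input
    (hν : (Finset.univ.filter (fun i : Fin N => δ i = 1)).card < N)
    -- (a)
    (ha : ∀ α : Fin N → (Fin n → ℂ),
      (∀ i : Fin N, α i ᵥ* (A.map Complex.ofReal) = 0) →
      (∀ i : Fin N, δ i = 1 → α i ᵥ* (B.map Complex.ofReal) = 0) →
      (∃ i : Fin N, α i ≠ 0) →
      ∃ i : Fin N, ∑ j : Fin N, ((W j i : ℝ) : ℂ) • α j ≠ 0)
    -- (b)
    (hb : ∀ s : ℂ, s ≠ 0 →
      (Matrix.fromCols
        ((1 : Matrix (Fin N) (Fin N) ℂ)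
          - ((C.map Complex.ofReal)
              * (s • (1 : Matrix (Fin n) (Fin n) ℂ) - A.map Complex.ofReal)⁻¹
              * (H.map Complex.ofReal)) 0 0 • (W.map Complex.ofReal))
        (((C.map Complex.ofReal)
              * (s • (1 : Matrix (Fin n) (Fin n) ℂ) - A.map Complex.ofReal)⁻¹
              * (B.map Complex.ofReal)) 0 0
          • ((Matrix.diagonal δ).map Complex.ofReal))).rank = N) :
    IsControllable
      ((1 : Matrix (Fin N) (Fin N) ℂ) ⊗ₖ (A.map Complex.ofReal)
        + (W.map Complex.ofReal) ⊗ₖ ((H.map Complex.ofReal) * (C.map Complex.ofReal)))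
      (((Matrix.diagonal δ).map Complex.ofReal) ⊗ₖ (B.map Complex.ofReal)) :=
  stmt13_general N n hn A hA B hB H κ hκ hH C τ hτ hC W δ ha hb
end
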